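/- Let A be a VRA such that every component automaton is a complete FA, and suppose that for all c ∈ Σ_call and r ∈ Σ_ret, the regular languages L_reg(A^J) over Σ_int ∪ Σ_proc, for J with f(J) = ⟨c, r⟩, form a partition of (Σ_int ∪ Σ_proc)^*. Then A is codeterministic and complete. -/

import Mathlib

/-- A symbol of a pushdown alphabet: internal, call, or return. -/
inductive VSym (I C R : Type) : Type
  | int  : I → VSym I C R
  | call : C → VSym I C R
  | ret  : R → VSym I C R

/-- The set of well-matched words over a pushdown alphabet. -/
inductive WellMatched {I C R : Type} : List (VSym I C R) → Prop
  | internal (u : List I) : WellMatched (u.map VSym.int)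
  | bracket {w : List (VSym I C R)} (c : C) (r : R) :
      WellMatched w → WellMatched (VSym.call c :: w ++ [VSym.ret r])
  | concat {w₁ w₂ : List (VSym I C R)} :
      WellMatched w₁ → WellMatched w₂ → WellMatched (w₁ ++ w₂)

def VSym.isCall {I C R : Type} : VSym I C R → Bool
  | .call _ => true
  | _ => false

def VSym.isRet {I C R : Type} : VSym I C R → Bool
  | .ret _ => true
  | _ => false

/-- The depth of a word: the maximal excess of call symbols over return symbols
in any prefix (the deepest level of unmatched calls at any point). -/
def VSym.depth {I C R : Type} (w : List (VSym I C R)) : ℕ :=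
  (w.inits.map fun p => p.countP VSym.isCall - p.countP VSym.isRet).foldr max 0

/-- A visibly recursive automaton: a family of finite automata over the internal
and procedural symbols, identified by the component map `comp` (`none` denotes the
starting automaton `A^S`, `some J` the component automaton `A^J`), together with a
linking function `link` assigning to each procedural symbol a call/return pair.
Transitions of each component automaton stay within that component. -/
structure VRA (I C R P Q : Type) where
  /-- the linking function `f : Σ_proc → Σ_call × Σ_ret` -/
  link : P → C × R
  /-- the component automaton each state belongs to (`none` = starting automaton) -/
  comp : Q → Option P
  init : Q → Prop
  final : Q → Prop
  intTrans : Q → I → Q → Prop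
  procTrans : Q → P → Q → Prop
  intTrans_comp : ∀ ⦃q a p⦄, intTrans q a p → comp p = comp q
  procTrans_comp : ∀ ⦃q J p⦄, procTrans q J p → comp p = comp q

namespace VRA

variable {I C R P Q : Type}

/-- One step of a recursive run, on configurations (state, stack of states). -/
inductive Step (A : VRA I C R P Q) : Q × List Q → VSym I C R → Q × List Q → Prop
  | int {q q' : Q} {σ : List Q} {a : I} :
      A.intTrans q a q' → Step A (q, σ) (VSym.int a) (q', σ)
  | call {q q' p : Q} {σ : List Q} {J : P} {c : C} :
      A.procTrans q J p → (A.link J).1 = c → A.comp q' = some J → A.init q' →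
      Step A (q, σ) (VSym.call c) (q', p :: σ)
  | ret {q p : Q} {σ : List Q} {J : P} {r : R} :
      A.comp q = some J → A.final q → (A.link J).2 = r →
      Step A (q, p :: σ) (VSym.ret r) (p, σ)

/-- Recursive runs of a VRA. -/
inductive Run (A : VRA I C R P Q) : Q × List Q → List (VSym I C R) → Q × List Q → Prop
  | nil (cfg : Q × List Q) : Run A cfg [] cfg
  | cons {cfg₁ cfg₂ cfg₃ : Q × List Q} {a : VSym I C R} {w : List (VSym I C R)} :
      Step A cfg₁ a cfg₂ → Run A cfg₂ w cfg₃ → Run A cfg₁ (a :: w) cfg₃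

/-- The recursive language of the component automaton `A^J` (`J = none` is the
starting automaton): words with a recursive run from an initial state of the
component with empty stack to a final state of the component with empty stack. -/
def RecLang (A : VRA I C R P Q) (J : Option P) : Set (List (VSym I C R)) :=
  {w | ∃ qi qf, A.comp qi = J ∧ A.init qi ∧ A.comp qf = J ∧ A.final qf ∧
    Run A (qi, []) w (qf, [])}

/-- The language of a VRA: the recursive language of its starting automaton. -/
def Lang (A : VRA I C R P Q) : Set (List (VSym I C R)) := A.RecLang none

/-- Regular runs: runs of the component automata viewed as ordinary finite
automata over the alphabet `Σ_int ∪ Σ_proc`. -/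
inductive RegRun (A : VRA I C R P Q) : Q → List (I ⊕ P) → Q → Prop
  | nil (q : Q) : RegRun A q [] q
  | int {q q' p : Q} {a : I} {w : List (I ⊕ P)} :
      A.intTrans q a q' → RegRun A q' w p → RegRun A q (Sum.inl a :: w) p
  | proc {q q' p : Q} {J : P} {w : List (I ⊕ P)} :
      A.procTrans q J q' → RegRun A q' w p → RegRun A q (Sum.inr J :: w) p

/-- The regular language of the component automaton `A^J`, over `Σ_int ∪ Σ_proc`. -/
def RegLang (A : VRA I C R P Q) (J : Option P) : Set (List (I ⊕ P)) :=
  {w | ∃ qi qf, A.comp qi = J ∧ A.init qi ∧ A.comp qf = J ∧ A.final qf ∧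
    RegRun A qi w qf}

/-- A VRA is codeterministic if component automata linked to the same call/return
pair have pairwise disjoint recursive languages. -/
def Codeterministic (A : VRA I C R P Q) : Prop :=
  ∀ J J' : P, J ≠ J' → A.link J = A.link J' →
    A.RecLang (some J) ∩ A.RecLang (some J') = ∅

/-- A VRA is complete if every state has an outgoing transition on every symbol of
`Σ_int ∪ Σ_proc`, and for every call/return pair the recursive languages of the
linked component automata cover all well-matched words. -/
def Complete (A : VRA I C R P Q) : Prop :=
  (∀ (q : Q) (a : I), ∃ p, A.intTrans q a p) ∧
  (∀ (q : Q) (J : P), ∃ p, A.procTrans q J p) ∧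
  (∀ (c : C) (r : R),
    (⋃ J ∈ {J : P | A.link J = (c, r)}, A.RecLang (some J)) = {w | WellMatched w})

/-- A VRA is deterministic if every component automaton (including the starting
one) has a unique initial state and deterministic transitions, and procedural
transitions from a common state on procedural symbols with the same call symbol
agree on the procedural symbol. -/
def Deterministic (A : VRA I C R P Q) : Prop :=
  (∀ J : Option P, ∃! q, A.comp q = J ∧ A.init q) ∧
  (∀ q a p p', A.intTrans q a p → A.intTrans q a p' → p = p') ∧
  (∀ q J p p', A.procTrans q J p → A.procTrans q J p' → p = p') ∧
  (∀ q J J' p p', A.procTrans q J p → A.procTrans q J' p' →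
    (A.link J).1 = (A.link J').1 → J = J')

/-- All component automata of the VRA are complete DFAs: a unique initial state in
each component and exactly one outgoing transition per state and symbol. -/
def AllCompleteDFA (A : VRA I C R P Q) : Prop :=
  (∀ J : Option P, ∃! q, A.comp q = J ∧ A.init q) ∧
  (∀ (q : Q) (a : I), ∃! p, A.intTrans q a p) ∧
  (∀ (q : Q) (J : P), ∃! p, A.procTrans q J p)

/-- The size of a VRA: number of states plus number of transitions. -/
noncomputable def size (A : VRA I C R P Q) : ℕ :=
  Nat.card Q + Nat.card {t : Q × I × Q // A.intTrans t.1 t.2.1 t.2.2}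
    + Nat.card {t : Q × P × Q // A.procTrans t.1 t.2.1 t.2.2}

end VRA

/-! Under the partition hypothesis every well-matched word `w` has a flattening `u` over
`Σ_int ∪ Σ_proc`: each bracketed block `⟨c w' r⟩` is replaced by a procedural symbol `J`
linked to `⟨c, r⟩` whose regular language contains a flattening of `w'`. A recursive run on
`w` is exactly a regular run on `u`: at a call the run enters some component linked to
`⟨c, r⟩` whose regular language contains the flattened block, and disjointness forces this
component to be `J`. So `w ∈ L(A^J) ↔ u ∈ L_reg(A^J)`, and since runs between empty stacks
only read well-matched words, codeterminism and completeness follow from the partition. -/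

theorem WellMatched.nil {I C R : Type} : WellMatched ([] : List (VSym I C R)) :=
  .internal []

namespace VRA

variable {I C R P Q : Type} {A : VRA I C R P Q}

theorem Run.append {cfg₁ cfg₂ cfg₃ : Q × List Q} {w₁ w₂ : List (VSym I C R)}
    (h₁ : Run A cfg₁ w₁ cfg₂) (h₂ : Run A cfg₂ w₂ cfg₃) : Run A cfg₁ (w₁ ++ w₂) cfg₃ := by
  induction h₁ with
  | nil => exact h₂
  | cons s _ ih => exact .cons s (ih h₂)

theorem Run.of_append {w₁ w₂ : List (VSym I C R)} {cfg₁ cfg₃ : Q × List Q}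
    (h : Run A cfg₁ (w₁ ++ w₂) cfg₃) : ∃ cfg₂, Run A cfg₁ w₁ cfg₂ ∧ Run A cfg₂ w₂ cfg₃ := by
  induction w₁ generalizing cfg₁ with
  | nil => exact ⟨cfg₁, .nil _, h⟩
  | cons a w₁ ih =>
    obtain _ | ⟨s, h⟩ := h
    obtain ⟨cfg₂, h₁, h₂⟩ := ih h
    exact ⟨cfg₂, .cons s h₁, h₂⟩

theorem RegRun.comp_eq {q q' : Q} {u : List (I ⊕ P)} (h : RegRun A q u q') :
    A.comp q' = A.comp q := by
  induction h with
  | nil => rfl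
  | int t _ ih => exact ih.trans (A.intTrans_comp t)
  | proc t _ ih => exact ih.trans (A.procTrans_comp t)

/-- `UnmatchedRets n w` : `w = w₀ r₁ w₁ ⋯ rₙ wₙ` with every `wᵢ` well-matched; these are
the words a run can read while emptying a stack of height `n`. -/
inductive UnmatchedRets {I C R : Type} : ℕ → List (VSym I C R) → Prop
  | base {w} : WellMatched w → UnmatchedRets 0 w
  | step {w₁ w₂ : List (VSym I C R)} {n : ℕ} (r : R) :
      WellMatched w₁ → UnmatchedRets n w₂ → UnmatchedRets (n + 1) (w₁ ++ VSym.ret r :: w₂)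

theorem UnmatchedRets.wellMatched_append {n : ℕ} {b w : List (VSym I C R)}
    (hb : WellMatched b) (h : UnmatchedRets n w) : UnmatchedRets n (b ++ w) := by
  cases h with
  | base h => exact .base (hb.concat h)
  | step r h₁ h₂ => exact List.append_assoc .. ▸ .step r (hb.concat h₁) h₂

theorem Run.unmatchedRets {cfg cfg' : Q × List Q} {w : List (VSym I C R)}
    (h : Run A cfg w cfg') (h' : cfg'.2 = []) : UnmatchedRets cfg.2.length w := by
  induction h with
  | nil => exact h' ▸ .base .nil
  | cons s _ ih =>
    cases s with
    | int _ => exact (ih h').wellMatched_append (.internal [_])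
    | @call _ _ _ _ _ c =>
      cases ih h' with
      | step r hw₁ h₂ => simpa using h₂.wellMatched_append (WellMatched.bracket c r hw₁)
    | ret => exact .step _ .nil (ih h')

theorem wellMatched_of_mem_recLang {J : Option P} {w : List (VSym I C R)}
    (hw : w ∈ A.RecLang J) : WellMatched w := by
  obtain ⟨_, _, _, _, _, _, hrun⟩ := hw
  obtain ⟨h⟩ := hrun.unmatchedRets rfl
  exact h

/-- `Flat A w u`: `u` is a flattening of the well-matched word `w`, in which every
bracketed block `⟨c w' r⟩` becomes a procedural symbol `J` linked to `⟨c, r⟩` whose regular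
language contains a flattening of `w'`. -/
inductive Flat (A : VRA I C R P Q) : List (VSym I C R) → List (I ⊕ P) → Prop
  | nil : Flat A [] []
  | int {w u} (a : I) : Flat A w u → Flat A (VSym.int a :: w) (Sum.inl a :: u)
  | brk {w' w : List (VSym I C R)} {u' u : List (I ⊕ P)} {J : P} {c : C} {r : R} :
      Flat A w' u' → A.link J = (c, r) → u' ∈ A.RegLang (some J) → Flat A w u →
      Flat A (VSym.call c :: w' ++ VSym.ret r :: w) (Sum.inr J :: u)

theorem Flat.append {w₁ w₂ : List (VSym I C R)} {u₁ u₂ : List (I ⊕ P)}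
    (h₁ : Flat A w₁ u₁) (h₂ : Flat A w₂ u₂) : Flat A (w₁ ++ w₂) (u₁ ++ u₂) := by
  induction h₁ with
  | nil => exact h₂
  | int a _ ih => exact .int a ih
  | brk hf' hJ hu' _ _ ih => simpa using Flat.brk hf' hJ hu' ih

theorem exists_mem_regLang_of_cover
    (hcover : ∀ (c : C) (r : R),
      (⋃ J ∈ {J : P | A.link J = (c, r)}, A.RegLang (some J)) = Set.univ)
    (c : C) (r : R) (u : List (I ⊕ P)) : ∃ J, A.link J = (c, r) ∧ u ∈ A.RegLang (some J) := by
  simpa using (hcover c r).ge (Set.mem_univ u)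

theorem exists_flat
    (hcover : ∀ (c : C) (r : R),
      (⋃ J ∈ {J : P | A.link J = (c, r)}, A.RegLang (some J)) = Set.univ)
    {w : List (VSym I C R)} (hw : WellMatched w) : ∃ u, Flat A w u := by
  induction hw with
  | internal v =>
    refine ⟨v.map Sum.inl, ?_⟩
    induction v with
    | nil => exact .nil
    | cons a v ih => exact .int a ih
  | bracket c r _ ih =>
    obtain ⟨u', hf⟩ := ih
    obtain ⟨J, hJ, hu'⟩ := exists_mem_regLang_of_cover hcover c r u'
    exact ⟨[Sum.inr J], .brk hf hJ hu' .nil⟩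
  | concat _ _ ih₁ ih₂ =>
    obtain ⟨u₁, h₁⟩ := ih₁
    obtain ⟨u₂, h₂⟩ := ih₂
    exact ⟨u₁ ++ u₂, h₁.append h₂⟩

theorem eq_of_mem_regLang_of_link_eq
    (hdisj : ∀ (c : C) (r : R) (J J' : P), A.link J = (c, r) → A.link J' = (c, r) →
      J ≠ J' → A.RegLang (some J) ∩ A.RegLang (some J') = ∅)
    {J J' : P} {u : List (I ⊕ P)} (hlink : A.link J = A.link J')
    (hu : u ∈ A.RegLang (some J)) (hu' : u ∈ A.RegLang (some J')) : J = J' := by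
  by_contra hne
  have hempty := hdisj _ _ J J' rfl hlink.symm hne
  exact hempty.subset ⟨hu, hu'⟩

theorem Flat.run_of_regRun {w : List (VSym I C R)} {u : List (I ⊕ P)} (hf : Flat A w u)
    {q q' : Q} (σ : List Q) (h : RegRun A q u q') : Run A (q, σ) w (q', σ) := by
  induction hf generalizing q q' σ with
  | nil => cases h; exact .nil _
  | int a _ ih =>
    obtain _ | ⟨t, h⟩ := h
    exact .cons (.int t) (ih σ h)
  | brk _ hJ hu' _ ih' ih =>
    obtain _ | _ | ⟨t, h⟩ := h
    obtain ⟨_, _, hci, hii, hcf, hff, hrr⟩ := hu'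
    exact .cons (.call t (by rw [hJ]) hci hii)
      ((ih' _ hrr).append (.cons (.ret hcf hff (by rw [hJ])) (ih σ h)))

theorem Flat.regRun_of_run
    (hdisj : ∀ (c : C) (r : R) (J J' : P), A.link J = (c, r) → A.link J' = (c, r) →
      J ≠ J' → A.RegLang (some J) ∩ A.RegLang (some J') = ∅)
    {w : List (VSym I C R)} {u : List (I ⊕ P)} (hf : Flat A w u)
    {q q'' : Q} {σ σ'' : List Q} (h : Run A (q, σ) w (q'', σ'')) :
    σ'' = σ ∧ RegRun A q u q'' := by
  induction hf generalizing q q'' σ σ'' with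
  | nil => cases h; exact ⟨rfl, .nil _⟩
  | int a _ ih =>
    obtain _ | ⟨s, h⟩ := h
    cases s with
    | int t => exact (ih h).imp_right (.int t)
  | @brk _ _ _ _ J c r _ hJ hu' _ ih' ih =>
    obtain _ | ⟨s, h⟩ := h
    cases s with
    | @call _ qi _ _ J₀ _ t hc hci hii =>
      obtain ⟨⟨qf, _⟩, hinner, hrest⟩ := Run.of_append h
      obtain ⟨rfl, hreg⟩ := ih' hinner
      obtain _ | ⟨s, hrest⟩ := hrest
      cases s with
      | @ret _ _ _ J₁ _ hcf hff hr =>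
        have hcf₀ : A.comp qf = some J₀ := hreg.comp_eq.trans hci
        obtain rfl : J₁ = J₀ := Option.some_injective _ (hcf.symm.trans hcf₀)
        have hJ₁ : A.link J₁ = (c, r) := Prod.ext hc hr
        obtain rfl : J₁ = J := eq_of_mem_regLang_of_link_eq hdisj (hJ₁.trans hJ.symm)
          ⟨qi, qf, hci, hii, hcf₀, hff, hreg⟩ hu'
        exact (ih hrest).imp_right (.proc t)

theorem mem_recLang_iff_of_flat
    (hdisj : ∀ (c : C) (r : R) (J J' : P), A.link J = (c, r) → A.link J' = (c, r) →
      J ≠ J' → A.RegLang (some J) ∩ A.RegLang (some J') = ∅)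
    {w : List (VSym I C R)} {u : List (I ⊕ P)} (hf : Flat A w u) {J : Option P} :
    w ∈ A.RecLang J ↔ u ∈ A.RegLang J := by
  constructor
  · rintro ⟨qi, qf, hci, hii, hcf, hff, hrun⟩
    exact ⟨qi, qf, hci, hii, hcf, hff, (hf.regRun_of_run hdisj hrun).2⟩
  · rintro ⟨qi, qf, hci, hii, hcf, hff, hrr⟩
    exact ⟨qi, qf, hci, hii, hcf, hff, hf.run_of_regRun [] hrr⟩

end VRA

/-- if all component automata of a VRA are complete FAs and, for each
call/return pair `⟨c,r⟩`, the regular languages of the components linked to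
`⟨c,r⟩` partition `(Σ_int ∪ Σ_proc)^*`, then the VRA is codeterministic and
complete. -/
theorem VRA.codet_complete_of_regLang_partition {I C R P Q : Type}
    (A : VRA I C R P Q)
    (hcInt : ∀ (q : Q) (a : I), ∃ p, A.intTrans q a p)
    (hcProc : ∀ (q : Q) (J : P), ∃ p, A.procTrans q J p)
    (hdisj : ∀ (c : C) (r : R) (J J' : P), A.link J = (c, r) → A.link J' = (c, r) →
      J ≠ J' → A.RegLang (some J) ∩ A.RegLang (some J') = ∅)
    (hcover : ∀ (c : C) (r : R),
      (⋃ J ∈ {J : P | A.link J = (c, r)}, A.RegLang (some J)) = Set.univ) :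
    A.Codeterministic ∧ A.Complete := by
  refine ⟨fun J J' hne hlink => ?_, hcInt, hcProc, fun c r => ?_⟩
  · refine Set.eq_empty_of_forall_notMem fun w ⟨hw, hw'⟩ => hne ?_
    obtain ⟨u, hu⟩ := exists_flat hcover (wellMatched_of_mem_recLang hw)
    exact eq_of_mem_regLang_of_link_eq hdisj hlink
      ((mem_recLang_iff_of_flat hdisj hu).1 hw) ((mem_recLang_iff_of_flat hdisj hu).1 hw')
  · ext w
    simp only [Set.mem_iUnion, Set.mem_ofPred_eq, exists_prop]
    refine ⟨fun ⟨_, _, hw⟩ => wellMatched_of_mem_recLang hw, fun hw => ?_⟩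
    obtain ⟨u, hu⟩ := exists_flat hcover hw
    obtain ⟨J, hJ, huJ⟩ := exists_mem_regLang_of_cover hcover c r u
    exact ⟨J, hJ, (mem_recLang_iff_of_flat hdisj hu).2 huJ⟩
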